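/- arXiv:1901.10442 — 2 statements merged into one kernel-verified Lean document; each statement's English description precedes it below -/
import Mathlib

section
/- Relational representation theorem for EDC-lattices: Let D be an EDC-lattice. Then there exist a set W, a reflexive and symmetric binary relation R on W, and a map h : D → (subsets of W) such that: h is injective, h(0) = ∅, h(1) = W, h(a+b) = h(a) ∪ h(b), h(a·b) = h(a) ∩ h(b), and for all a, b ∈ D: a C b iff there exist x ∈ h(a), y ∈ h(b) with x R y; a Ĉ b iff there exist x ∉ h(a), y ∉ h(b) with x R y; a ≪ b iff there are no x ∈ h(a), y ∉ h(b) with x R y. -/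
/-!
Represent `D` on its prime filters, relating `Γ` and `Δ` by `Rc`. Every witness comes from Zorn's
lemma applied to pairs of filters whose elements are pairwise related by a precontact relation: a
maximal such pair consists of prime filters, and maximality yields, for each `x ∉ Γ`, some `f ∈ Γ`
and `g ∈ Δ` with `f ⊓ x` and `g` unrelated; the mixed axioms turn these into the remaining clauses
of `Rc`. Contact uses the relation `C`, nontangential inclusion uses `¬ ≪` between a filter and an
ideal, dual contact reduces to contact because the axioms are self-dual, and injectivity is the
case `¬ ≤`, the prime filter theorem.
-/

universe u

/-- Extended distributive contact lattice (EDC-lattice): a bounded distributive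
lattice with contact `C`, dual contact `Cd` and nontangential part-of `Ll`
satisfying the 23 axioms. -/
structure EDC (D : Type u) [DistribLattice D] [BoundedOrder D] where
  C : D → D → Prop
  Cd : D → D → Prop
  Ll : D → D → Prop
  c1 : ∀ a b, C a b → a ≠ ⊥ ∧ b ≠ ⊥
  c2 : ∀ a a' b b', C a b → a ≤ a' → b ≤ b' → C a' b'
  c3 : ∀ a b c, C a (b ⊔ c) → C a b ∨ C a c
  c4 : ∀ a b, C a b → C b a
  c5 : ∀ a b, a ⊓ b ≠ ⊥ → C a b
  cd1 : ∀ a b, Cd a b → a ≠ ⊤ ∧ b ≠ ⊤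
  cd2 : ∀ a a' b b', Cd a b → a' ≤ a → b' ≤ b → Cd a' b'
  cd3 : ∀ a b c, Cd a (b ⊓ c) → Cd a b ∨ Cd a c
  cd4 : ∀ a b, Cd a b → Cd b a
  cd5 : ∀ a b, a ⊔ b ≠ ⊤ → Cd a b
  ll1 : Ll ⊥ ⊥
  ll2 : Ll ⊤ ⊤
  ll3 : ∀ a b, Ll a b → a ≤ b
  ll4 : ∀ a a' b b', a' ≤ a → Ll a b → b ≤ b' → Ll a' b'
  ll5 : ∀ a b c, Ll a c → Ll b c → Ll (a ⊔ b) c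
  ll6 : ∀ a b c, Ll c a → Ll c b → Ll c (a ⊓ b)
  ll7 : ∀ a b c d, Ll a b → Ll (b ⊓ c) d → Ll c (a ⊔ d) → Ll c d
  mc1 : ∀ a b c, C a b → Ll a c → C a (b ⊓ c)
  mc2 : ∀ a b c d, ¬ C a (b ⊓ c) → C a b → ¬ C (a ⊓ d) b → Cd d c
  mcd1 : ∀ a b c, Cd a b → Ll c a → Cd a (b ⊔ c)
  mcd2 : ∀ a b c d, ¬ Cd a (b ⊔ c) → Cd a b → ¬ Cd (a ⊔ d) b → C d c
  mll1 : ∀ a b c, ¬ Cd a b → Ll (a ⊓ c) b → Ll c b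
  mll2 : ∀ a b c, ¬ C a b → Ll b (a ⊔ c) → Ll b c

/-- A filter of a bounded (distributive) lattice. -/
def EDCFilter {D : Type u} [DistribLattice D] [BoundedOrder D] (F : Set D) : Prop :=
  ⊤ ∈ F ∧ (∀ a b : D, a ∈ F → a ≤ b → b ∈ F) ∧ (∀ a b : D, a ∈ F → b ∈ F → a ⊓ b ∈ F)

/-- An ideal of a bounded (distributive) lattice. -/
def EDCIdeal {D : Type u} [DistribLattice D] [BoundedOrder D] (I : Set D) : Prop :=
  ⊥ ∈ I ∧ (∀ a b : D, a ∈ I → b ≤ a → b ∈ I) ∧ (∀ a b : D, a ∈ I → b ∈ I → a ⊔ b ∈ I)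

/-- A prime filter: a proper filter such that `a ⊔ b ∈ F` implies `a ∈ F` or `b ∈ F`. -/
def PrimeFilter {D : Type u} [DistribLattice D] [BoundedOrder D] (F : Set D) : Prop :=
  EDCFilter F ∧ ⊥ ∉ F ∧ ∀ a b : D, a ⊔ b ∈ F → a ∈ F ∨ b ∈ F

/-- The canonical relation `R^c` between (prime) filters of an EDC-lattice. -/
def Rc {D : Type u} [DistribLattice D] [BoundedOrder D] (E : EDC D) (Γ Δ : Set D) : Prop :=
  ∀ a b : D,
    (a ∈ Γ → b ∈ Δ → E.C a b) ∧
    (a ∉ Γ → b ∉ Δ → E.Cd a b) ∧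
    (a ∈ Γ → b ∉ Δ → ¬ E.Ll a b) ∧
    (a ∉ Γ → b ∈ Δ → ¬ E.Ll b a)

open OrderDual

section FilterInsert

variable {L : Type*} [SemilatticeInf L]

/-- The filter generated by `F ∪ {x}`, for a filter `F`. -/
def filterInsert (F : Set L) (x : L) : Set L := {z | ∃ f ∈ F, f ⊓ x ≤ z}

theorem subset_filterInsert (F : Set L) (x : L) : F ⊆ filterInsert F x :=
  fun z hz => ⟨z, hz, inf_le_left⟩

end FilterInsert

section Filters

variable {L : Type*} [DistribLattice L] [BoundedOrder L]

namespace EDCFilter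

variable {F : Set L} {a b : L}

theorem top_mem (hF : EDCFilter F) : ⊤ ∈ F := hF.1

theorem mem_of_le (hF : EDCFilter F) (ha : a ∈ F) (hab : a ≤ b) : b ∈ F := hF.2.1 a b ha hab

theorem inf_mem (hF : EDCFilter F) (ha : a ∈ F) (hb : b ∈ F) : a ⊓ b ∈ F := hF.2.2 a b ha hb

theorem inf_mem_iff (hF : EDCFilter F) : a ⊓ b ∈ F ↔ a ∈ F ∧ b ∈ F :=
  ⟨fun h => ⟨hF.mem_of_le h inf_le_left, hF.mem_of_le h inf_le_right⟩,
    fun h => hF.inf_mem h.1 h.2⟩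

theorem iUnion {ι : Type*} [Nonempty ι] {F : ι → Set L} (hdir : Directed (· ⊆ ·) F)
    (hF : ∀ i, EDCFilter (F i)) : EDCFilter (⋃ i, F i) := by
  obtain ⟨i⟩ := ‹Nonempty ι›
  refine ⟨Set.mem_iUnion.2 ⟨i, (hF i).top_mem⟩, ?_, ?_⟩ <;> simp only [Set.mem_iUnion]
  · rintro a b ⟨i, ha⟩ hab
    exact ⟨i, (hF i).mem_of_le ha hab⟩
  · rintro a b ⟨i, ha⟩ ⟨j, hb⟩
    obtain ⟨k, hik, hjk⟩ := hdir i j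
    exact ⟨k, (hF k).inf_mem (hik ha) (hjk hb)⟩

theorem mem_filterInsert_self (hF : EDCFilter F) (x : L) : x ∈ filterInsert F x :=
  ⟨⊤, hF.top_mem, inf_le_right⟩

theorem filterInsert (hF : EDCFilter F) (x : L) : EDCFilter (filterInsert F x) := by
  refine ⟨⟨⊤, hF.top_mem, le_top⟩, ?_, ?_⟩
  · rintro z w ⟨f, hf, hfz⟩ hzw
    exact ⟨f, hf, hfz.trans hzw⟩
  · rintro z w ⟨f, hf, hfz⟩ ⟨g, hg, hgw⟩
    refine ⟨f ⊓ g, hF.inf_mem hf hg, le_inf ?_ ?_⟩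
    · exact (inf_le_inf_right x inf_le_left).trans hfz
    · exact (inf_le_inf_right x inf_le_right).trans hgw

end EDCFilter

theorem edcFilter_Ici (a : L) : EDCFilter (Set.Ici a) :=
  ⟨le_top, fun _ _ ha hab => ha.trans hab, fun _ _ ha hb => le_inf ha hb⟩

namespace PrimeFilter

variable {Γ : Set L} {a b : L}

theorem edcFilter (hΓ : PrimeFilter Γ) : EDCFilter Γ := hΓ.1

theorem bot_notMem (hΓ : PrimeFilter Γ) : ⊥ ∉ Γ := hΓ.2.1

theorem sup_mem_iff (hΓ : PrimeFilter Γ) : a ⊔ b ∈ Γ ↔ a ∈ Γ ∨ b ∈ Γ :=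
  ⟨hΓ.2.2 a b, fun h => h.elim (fun ha => hΓ.1.mem_of_le ha le_sup_left)
    (fun hb => hΓ.1.mem_of_le hb le_sup_right)⟩

/-- Prime ideals of `L` are handled as prime filters of `Lᵒᵈ`. -/
theorem compl_preimage_toDual {S : Set Lᵒᵈ} (hS : PrimeFilter S) :
    PrimeFilter (toDual ⁻¹' S)ᶜ := by
  refine ⟨⟨hS.bot_notMem, ?_, ?_⟩, fun h => h hS.edcFilter.top_mem, ?_⟩
  · exact fun a b ha hab hb => ha (hS.edcFilter.mem_of_le (b := toDual a) hb hab)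
  · exact fun a b ha hb hab => (hS.sup_mem_iff.1 hab).elim ha hb
  · intro a b hab
    by_contra! h
    exact hab (hS.edcFilter.inf_mem (a := toDual a) (b := toDual b)
      (not_not.1 h.1) (not_not.1 h.2))

end PrimeFilter

end Filters

section Precontact

variable {L M : Type*}

/-- The axioms (C1)–(C3) of a contact relation, without symmetry and between two lattices. -/
structure IsPrecontact [Lattice L] [OrderBot L] [Lattice M] [OrderBot M]
    (Rel : L → M → Prop) : Prop where
  ne_bot_left : ∀ {a b}, Rel a b → a ≠ ⊥
  ne_bot_right : ∀ {a b}, Rel a b → b ≠ ⊥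
  mono : ∀ {a a' b b'}, Rel a b → a ≤ a' → b ≤ b' → Rel a' b'
  sup_left : ∀ {a a' b}, Rel (a ⊔ a') b → Rel a b ∨ Rel a' b
  sup_right : ∀ {a b b'}, Rel a (b ⊔ b') → Rel a b ∨ Rel a b'

theorem IsPrecontact.flip [Lattice L] [OrderBot L] [Lattice M] [OrderBot M]
    {Rel : L → M → Prop} (hR : IsPrecontact Rel) : IsPrecontact (flip Rel) :=
  ⟨hR.ne_bot_right, hR.ne_bot_left, fun h ha hb => hR.mono h hb ha, hR.sup_right, hR.sup_left⟩

variable [DistribLattice L] [BoundedOrder L] [DistribLattice M] [BoundedOrder M]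
  {Rel : L → M → Prop}

def IsLinkedPair (Rel : L → M → Prop) (p : Set L × Set M) : Prop :=
  EDCFilter p.1 ∧ EDCFilter p.2 ∧ ∀ x ∈ p.1, ∀ y ∈ p.2, Rel x y

theorem IsLinkedPair.swap {p : Set L × Set M} (hp : IsLinkedPair Rel p) :
    IsLinkedPair (flip Rel) p.swap :=
  ⟨hp.2.1, hp.1, fun y hy x hx => hp.2.2 x hx y hy⟩

theorem Maximal.isLinkedPair_swap {p : Set L × Set M} (hp : Maximal (IsLinkedPair Rel) p) :
    Maximal (IsLinkedPair (flip Rel)) p.swap :=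
  ⟨hp.1.swap, fun _ hq hpq => Prod.swap_le_swap.1 (hp.2 hq.swap (Prod.swap_le_swap.2 hpq))⟩

theorem IsLinkedPair.iUnion {ι : Type*} [Nonempty ι] {P : ι → Set L × Set M}
    (hdir : Directed (· ≤ ·) P) (hP : ∀ i, IsLinkedPair Rel (P i)) :
    IsLinkedPair Rel (⋃ i, (P i).1, ⋃ i, (P i).2) := by
  refine ⟨EDCFilter.iUnion (hdir.mono_comp _ fun _ _ h => h.1) fun i => (hP i).1,
    EDCFilter.iUnion (hdir.mono_comp _ fun _ _ h => h.2) fun i => (hP i).2.1, ?_⟩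
  simp only [Set.mem_iUnion]
  rintro x ⟨i, hx⟩ y ⟨j, hy⟩
  obtain ⟨k, hik, hjk⟩ := hdir i j
  exact (hP k).2.2 x (hik.1 hx) y (hjk.2 hy)

namespace IsPrecontact

theorem exists_maximal_isLinkedPair (hR : IsPrecontact Rel) {a : L} {b : M}
    (hab : Rel a b) :
    ∃ p, Maximal (IsLinkedPair Rel) p ∧ a ∈ p.1 ∧ b ∈ p.2 := by
  have hlinked : IsLinkedPair Rel (Set.Ici a, Set.Ici b) :=
    ⟨edcFilter_Ici a, edcFilter_Ici b, fun x hx y hy => hR.mono hab hx hy⟩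
  obtain ⟨p, hle, hp⟩ := zorn_le_nonempty₀ {p | IsLinkedPair Rel p}
    (fun c hc hchain q hq => by
      have : Nonempty c := ⟨⟨q, hq⟩⟩
      exact ⟨_, IsLinkedPair.iUnion hchain.directed fun i => hc i.2,
        fun r hr => ⟨Set.subset_iUnion_of_subset ⟨r, hr⟩ le_rfl,
          Set.subset_iUnion_of_subset ⟨r, hr⟩ le_rfl⟩⟩) _ hlinked
  exact ⟨p, hp, hle.1 le_rfl, hle.2 le_rfl⟩

theorem exists_not_rel_inf_left (hR : IsPrecontact Rel) {p : Set L × Set M}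
    (hp : Maximal (IsLinkedPair Rel) p) {x : L} (hx : x ∉ p.1) :
    ∃ f ∈ p.1, ∃ g ∈ p.2, ¬ Rel (f ⊓ x) g := by
  by_contra! h
  have hlinked : IsLinkedPair Rel (filterInsert p.1 x, p.2) :=
    ⟨hp.1.1.filterInsert x, hp.1.2.1,
      fun z ⟨f, hf, hfz⟩ y hy => hR.mono (h f hf y hy) hfz le_rfl⟩
  exact hx ((hp.2 hlinked ⟨subset_filterInsert p.1 x, le_rfl⟩).1 (hp.1.1.mem_filterInsert_self x))

theorem exists_not_rel_inf_right (hR : IsPrecontact Rel) {p : Set L × Set M}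
    (hp : Maximal (IsLinkedPair Rel) p) {y : M} (hy : y ∉ p.2) :
    ∃ f ∈ p.1, ∃ g ∈ p.2, ¬ Rel f (g ⊓ y) := by
  obtain ⟨g, hg, f, hf, h⟩ := hR.flip.exists_not_rel_inf_left hp.isLinkedPair_swap hy
  exact ⟨f, hf, g, hg, h⟩

theorem primeFilter_fst (hR : IsPrecontact Rel) {p : Set L × Set M}
    (hp : Maximal (IsLinkedPair Rel) p) : PrimeFilter p.1 := by
  obtain ⟨hF, hG, hlink⟩ := hp.1
  refine ⟨hF, fun h => hR.ne_bot_left (hlink ⊥ h ⊤ hG.top_mem) rfl, fun x y hxy => ?_⟩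
  by_contra! hxy'
  obtain ⟨f, hf, g, hg, hfg⟩ := hR.exists_not_rel_inf_left hp hxy'.1
  obtain ⟨f', hf', g', hg', hfg'⟩ := hR.exists_not_rel_inf_left hp hxy'.2
  have hrel := hlink _ (hF.inf_mem (hF.inf_mem hf hf') hxy) _ (hG.inf_mem hg hg')
  rw [inf_sup_left] at hrel
  rcases hR.sup_left hrel with h | h
  · exact hfg (hR.mono h (inf_le_inf_right x inf_le_left) inf_le_left)
  · exact hfg' (hR.mono h (inf_le_inf_right y inf_le_right) inf_le_right)

theorem primeFilter_snd (hR : IsPrecontact Rel) {p : Set L × Set M}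
    (hp : Maximal (IsLinkedPair Rel) p) : PrimeFilter p.2 :=
  hR.flip.primeFilter_fst hp.isLinkedPair_swap

end IsPrecontact

end Precontact

theorem isPrecontact_not_le {L : Type*} [DistribLattice L] [BoundedOrder L] :
    IsPrecontact fun (a : L) (b : Lᵒᵈ) => ¬ a ≤ ofDual b where
  ne_bot_left h ha := h (ha ▸ bot_le)
  ne_bot_right h hb := h (hb ▸ le_top)
  mono h ha hb hle := h ((ha.trans hle).trans hb)
  sup_left h := not_and_or.1 fun hle => h (sup_le hle.1 hle.2)
  sup_right h := not_and_or.1 fun hle => h (le_inf hle.1 hle.2)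

theorem le_of_forall_primeFilter {L : Type*} [DistribLattice L] [BoundedOrder L] {a b : L}
    (h : ∀ Γ : Set L, PrimeFilter Γ → a ∈ Γ → b ∈ Γ) : a ≤ b := by
  by_contra hab
  obtain ⟨p, hp, ha, hb⟩ := isPrecontact_not_le.exists_maximal_isLinkedPair (b := toDual b) hab
  exact hp.1.2.2 b (h _ (isPrecontact_not_le.primeFilter_fst hp) ha) (toDual b) hb le_rfl

namespace EDC

variable {D : Type*} [DistribLattice D] [BoundedOrder D]

def dual (E : EDC D) : EDC Dᵒᵈ where
  C a b := E.Cd (ofDual a) (ofDual b)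
  Cd a b := E.C (ofDual a) (ofDual b)
  Ll a b := E.Ll (ofDual b) (ofDual a)
  c1 := E.cd1
  c2 := E.cd2
  c3 := E.cd3
  c4 := E.cd4
  c5 := E.cd5
  cd1 := E.c1
  cd2 := E.c2
  cd3 := E.c3
  cd4 := E.c4
  cd5 := E.c5
  ll1 := E.ll2
  ll2 := E.ll1
  ll3 a b := E.ll3 (ofDual b) (ofDual a)
  ll4 _ _ _ _ ha h hb := E.ll4 _ _ _ _ hb h ha
  ll5 a b c := E.ll6 (ofDual a) (ofDual b) (ofDual c)
  ll6 a b c := E.ll5 (ofDual a) (ofDual b) (ofDual c)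
  ll7 _ _ _ _ hab hbcd hcad := E.ll7 _ _ _ _ hab hcad hbcd
  mc1 := E.mcd1
  mc2 := E.mcd2
  mcd1 := E.mc1
  mcd2 := E.mc2
  mll1 := E.mll2
  mll2 := E.mll1

theorem isPrecontact_C (E : EDC D) : IsPrecontact E.C where
  ne_bot_left h := (E.c1 _ _ h).1
  ne_bot_right h := (E.c1 _ _ h).2
  mono h ha hb := E.c2 _ _ _ _ h ha hb
  sup_left h := (E.c3 _ _ _ (E.c4 _ _ h)).imp (E.c4 _ _) (E.c4 _ _)
  sup_right h := E.c3 _ _ _ h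

theorem isPrecontact_not_Ll (E : EDC D) :
    IsPrecontact fun (a : D) (b : Dᵒᵈ) => ¬ E.Ll a (ofDual b) where
  ne_bot_left h ha := h (ha ▸ E.ll4 _ _ _ _ le_rfl E.ll1 bot_le)
  ne_bot_right h hb := h (hb ▸ E.ll4 _ _ _ _ le_top E.ll2 le_rfl)
  mono h ha hb hLl := h (E.ll4 _ _ _ _ ha hLl hb)
  sup_left h := not_and_or.1 fun hLl => h (E.ll5 _ _ _ hLl.1 hLl.2)
  sup_right h := not_and_or.1 fun hLl => h (E.ll6 _ _ _ hLl.1 hLl.2)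

theorem exists_rc_of_C (E : EDC D) {a b : D} (hab : E.C a b) :
    ∃ Γ Δ, PrimeFilter Γ ∧ PrimeFilter Δ ∧ a ∈ Γ ∧ b ∈ Δ ∧ Rc E Γ Δ := by
  have hR := E.isPrecontact_C
  obtain ⟨p, hp, ha, hb⟩ := hR.exists_maximal_isLinkedPair hab
  obtain ⟨hΓ, hΔ, hlink⟩ := hp.1
  refine ⟨p.1, p.2, hR.primeFilter_fst hp, hR.primeFilter_snd hp, ha, hb,
    fun u v => ⟨fun hu hv => hlink u hu v hv, fun hu hv => ?_, fun hu hv hLl => ?_,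
      fun hu hv hLl => ?_⟩⟩
  · obtain ⟨f, hf, g, hg, hfg⟩ := hR.exists_not_rel_inf_left hp hu
    obtain ⟨f', hf', g', hg', hfg'⟩ := hR.exists_not_rel_inf_right hp hv
    refine E.mc2 (f ⊓ f') (g ⊓ g') v u (fun h => hfg' ?_)
      (hlink _ (hΓ.inf_mem hf hf') _ (hΔ.inf_mem hg hg')) (fun h => hfg ?_)
    · exact hR.mono h inf_le_right (inf_le_inf_right v inf_le_right)
    · exact hR.mono h (inf_le_inf_right u inf_le_left) inf_le_left
  · obtain ⟨f, hf, g, hg, hfg⟩ := hR.exists_not_rel_inf_right hp hv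
    have hC := E.mc1 _ _ _ (hlink _ (hΓ.inf_mem hf hu) _ hg) (E.ll4 _ _ _ _ inf_le_right hLl le_rfl)
    exact hfg (hR.mono hC inf_le_left le_rfl)
  · obtain ⟨f, hf, g, hg, hfg⟩ := hR.exists_not_rel_inf_left hp hu
    have hC := E.mc1 _ _ _ (E.c4 _ _ (hlink _ hf _ (hΔ.inf_mem hg hv)))
      (E.ll4 _ _ _ _ inf_le_right hLl le_rfl)
    exact hfg (E.c4 _ _ (hR.mono hC inf_le_left le_rfl))

theorem rc_compl_preimage_of_rc_dual (E : EDC D) {Γ Δ : Set Dᵒᵈ} (h : Rc E.dual Γ Δ) :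
    Rc E (toDual ⁻¹' Γ)ᶜ (toDual ⁻¹' Δ)ᶜ := by
  intro a b
  obtain ⟨hCd, hC, hLl, hLl'⟩ := h (toDual a) (toDual b)
  exact ⟨hC, fun ha hb => hCd (not_not.1 ha) (not_not.1 hb),
    fun ha hb => hLl' ha (not_not.1 hb), fun ha hb => hLl (not_not.1 ha) hb⟩

theorem exists_rc_of_Cd (E : EDC D) {a b : D} (hab : E.Cd a b) :
    ∃ Γ Δ, PrimeFilter Γ ∧ PrimeFilter Δ ∧ a ∉ Γ ∧ b ∉ Δ ∧ Rc E Γ Δ := by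
  obtain ⟨Γ, Δ, hΓ, hΔ, ha, hb, hR⟩ :=
    E.dual.exists_rc_of_C (a := toDual a) (b := toDual b) hab
  exact ⟨_, _, hΓ.compl_preimage_toDual, hΔ.compl_preimage_toDual, not_not.2 ha, not_not.2 hb,
    E.rc_compl_preimage_of_rc_dual hR⟩

theorem exists_rc_of_not_Ll (E : EDC D) {a b : D} (hab : ¬ E.Ll a b) :
    ∃ Γ Δ, PrimeFilter Γ ∧ PrimeFilter Δ ∧ a ∈ Γ ∧ b ∉ Δ ∧ Rc E Γ Δ := by
  have hR := E.isPrecontact_not_Ll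
  obtain ⟨p, hp, ha, hb⟩ := hR.exists_maximal_isLinkedPair (b := toDual b) hab
  obtain ⟨hΓ, hQ, hlink⟩ := hp.1
  -- `p.2` is an ideal of `D`, encoded as a filter of `Dᵒᵈ`
  refine ⟨p.1, (toDual ⁻¹' p.2)ᶜ, hR.primeFilter_fst hp,
    (hR.primeFilter_snd hp).compl_preimage_toDual, ha, not_not.2 hb, fun u v =>
      ⟨fun hu hv => ?_, fun hu hv => ?_, fun hu hv => hlink u hu _ (not_not.1 hv),
        fun hu hv hLl => ?_⟩⟩
  · by_contra hC
    obtain ⟨f, hf, q, hq, hfq⟩ := hR.exists_not_rel_inf_right hp (y := toDual v) hv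
    have hLl : E.Ll (f ⊓ u) (v ⊔ ofDual q) :=
      E.ll4 _ _ _ _ inf_le_left (not_not.1 hfq) (sup_comm (ofDual q) v).le
    refine hlink _ (hΓ.inf_mem hf hu) q hq (E.mll2 v (f ⊓ u) _ (fun h => hC ?_) hLl)
    exact E.c4 _ _ (E.c2 _ _ _ _ h le_rfl inf_le_right)
  · by_contra hCd
    obtain ⟨f, hf, q, hq, hfq⟩ := hR.exists_not_rel_inf_left hp hu
    have hLl : E.Ll (u ⊓ f) (ofDual q ⊔ v) :=
      E.ll4 _ _ _ _ (inf_comm u f).le (not_not.1 hfq) le_sup_left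
    exact hlink f hf _ (hQ.inf_mem hq (not_not.1 hv))
      (E.mll1 u _ f (fun h => hCd (E.cd2 _ _ _ _ h le_rfl le_sup_right)) hLl)
  · obtain ⟨f, hf, q, hq, hfq⟩ := hR.exists_not_rel_inf_left hp hu
    obtain ⟨f', hf', q', hq', hfq'⟩ := hR.exists_not_rel_inf_right hp (y := toDual v) hv
    have h1 : E.Ll (u ⊓ (f ⊓ f')) (ofDual q ⊔ ofDual q') :=
      E.ll4 _ _ _ _ (le_inf (inf_le_right.trans inf_le_left) inf_le_left) (not_not.1 hfq)
        le_sup_left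
    have h2 : E.Ll (f ⊓ f') (v ⊔ (ofDual q ⊔ ofDual q')) :=
      E.ll4 _ _ _ _ inf_le_right (not_not.1 hfq')
        (sup_le (le_sup_right.trans le_sup_right) le_sup_left)
    exact hlink _ (hΓ.inf_mem hf hf') _ (hQ.inf_mem hq hq') (E.ll7 v u _ _ hLl h1 h2)

theorem rc_refl (E : EDC D) {Γ : Set D} (hΓ : PrimeFilter Γ) : Rc E Γ Γ := by
  intro u v
  refine ⟨fun hu hv => E.c5 _ _ fun h => hΓ.bot_notMem (h ▸ hΓ.edcFilter.inf_mem hu hv),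
    fun hu hv => E.cd5 _ _ fun h => ?_,
    fun hu hv hLl => hv (hΓ.edcFilter.mem_of_le hu (E.ll3 _ _ hLl)),
    fun hu hv hLl => hu (hΓ.edcFilter.mem_of_le hv (E.ll3 _ _ hLl))⟩
  exact (hΓ.sup_mem_iff.1 (h ▸ hΓ.edcFilter.top_mem)).elim hu hv

theorem rc_symm (E : EDC D) {Γ Δ : Set D} (h : Rc E Γ Δ) : Rc E Δ Γ := fun u v =>
  ⟨fun hu hv => E.c4 _ _ ((h v u).1 hv hu), fun hu hv => E.cd4 _ _ ((h v u).2.1 hv hu),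
    fun hu hv => (h v u).2.2.2 hv hu, fun hu hv => (h v u).2.2.1 hv hu⟩

end EDC

/-- relational representation theorem for EDC-lattices. -/
theorem stmt8 {D : Type u} [DistribLattice D] [BoundedOrder D] (E : EDC D) :
    ∃ (W : Type u) (R : W → W → Prop) (h : D → Set W),
      (∀ x, R x x) ∧ (∀ x y, R x y → R y x) ∧
      Function.Injective h ∧
      h ⊥ = ∅ ∧ h ⊤ = Set.univ ∧
      (∀ a b : D, h (a ⊔ b) = h a ∪ h b) ∧
      (∀ a b : D, h (a ⊓ b) = h a ∩ h b) ∧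
      (∀ a b : D, E.C a b ↔ ∃ x ∈ h a, ∃ y ∈ h b, R x y) ∧
      (∀ a b : D, E.Cd a b ↔ ∃ x ∉ h a, ∃ y ∉ h b, R x y) ∧
      (∀ a b : D, E.Ll a b ↔ ¬ ∃ x ∈ h a, ∃ y ∉ h b, R x y) := by
  refine ⟨{Γ : Set D // PrimeFilter Γ}, fun Γ Δ => Rc E Γ Δ, fun a => {Γ | a ∈ Γ.1},
    fun Γ => E.rc_refl Γ.2, fun _ _ => E.rc_symm, fun a b hab => ?_,
    Set.eq_empty_of_forall_notMem fun Γ => Γ.2.bot_notMem,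
    Set.eq_univ_of_forall fun Γ => Γ.2.edcFilter.top_mem,
    fun a b => Set.ext fun Γ => Γ.2.sup_mem_iff,
    fun a b => Set.ext fun Γ => Γ.2.edcFilter.inf_mem_iff,
    fun a b => ⟨fun hab => ?_, fun ⟨Γ, ha, Δ, hb, hR⟩ => (hR a b).1 ha hb⟩,
    fun a b => ⟨fun hab => ?_, fun ⟨Γ, ha, Δ, hb, hR⟩ => (hR a b).2.1 ha hb⟩,
    fun a b => ⟨fun hab ⟨Γ, ha, Δ, hb, hR⟩ => (hR a b).2.2.1 ha hb hab, fun hab => ?_⟩⟩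
  · exact le_antisymm (le_of_forall_primeFilter fun Γ hΓ => (Set.ext_iff.1 hab ⟨Γ, hΓ⟩).1)
      (le_of_forall_primeFilter fun Γ hΓ => (Set.ext_iff.1 hab ⟨Γ, hΓ⟩).2)
  · obtain ⟨Γ, Δ, hΓ, hΔ, ha, hb, hR⟩ := E.exists_rc_of_C hab
    exact ⟨⟨Γ, hΓ⟩, ha, ⟨Δ, hΔ⟩, hb, hR⟩
  · obtain ⟨Γ, Δ, hΓ, hΔ, ha, hb, hR⟩ := E.exists_rc_of_Cd hab
    exact ⟨⟨Γ, hΓ⟩, ha, ⟨Δ, hΔ⟩, hb, hR⟩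
  · by_contra hLl
    obtain ⟨Γ, Δ, hΓ, hΔ, ha, hb, hR⟩ := E.exists_rc_of_not_Ll hLl
    exact hab ⟨⟨Γ, hΓ⟩, ha, ⟨Δ, hΔ⟩, hb, hR⟩
end

section
/- Let D be an EDC-lattice, Γ a clan of D and a ∈ D. Then the following are equivalent: (i) for all c ∈ D, a + c = 1 implies c ∈ Γ; (ii) there exists a prime filter U of D with U ⊆ Γ and a ∉ U. -/
universe u

/-- A clan of an EDC-lattice. -/
def IsClan {D : Type u} [DistribLattice D] [BoundedOrder D] (E : EDC D) (Γ : Set D) : Prop :=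
  ⊤ ∈ Γ ∧ ⊥ ∉ Γ ∧ (∀ a b : D, a ∈ Γ → a ≤ b → b ∈ Γ) ∧
    (∀ a b : D, a ⊔ b ∈ Γ → a ∈ Γ ∨ b ∈ Γ) ∧ (∀ a b : D, a ∈ Γ → b ∈ Γ → E.C a b)

/-!
If every `c` with `a ⊔ c = ⊤` lies in `Γ`, then the filter `{c | a ⊔ c = ⊤}` is disjoint from the
ideal generated by `a` and the complement of `Γ` (an ideal, since a clan is an up-closed,
`⊔`-prime set avoiding `⊥`). The prime ideal theorem separates them by a prime ideal `J`, and the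
prime filter `Jᶜ` lies in `Γ` and misses `a`. Conversely, `a ⊔ c = ⊤` puts `a` or `c` into any
prime filter, so `c` is in `U ⊆ Γ` whenever `a ∉ U`.
-/

open Order

section

variable {D : Type u}

theorem isIdeal_compl_of_sup_mem [SemilatticeSup D] [OrderBot D] {Γ : Set D}
    (hbot : ⊥ ∉ Γ) (hup : ∀ x y, x ∈ Γ → x ≤ y → y ∈ Γ)
    (hsup : ∀ x y, x ⊔ y ∈ Γ → x ∈ Γ ∨ y ∈ Γ) : IsIdeal Γᶜ where
  IsLowerSet _ _ hxy hy hx := hy (hup _ _ hx hxy)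
  Nonempty := ⟨⊥, hbot⟩
  Directed x hx y hy :=
    ⟨x ⊔ y, fun h => (hsup x y h).elim hx hy, le_sup_left, le_sup_right⟩

variable [DistribLattice D] [BoundedOrder D]

theorem isPFilter_setOf_sup_eq_top (a : D) : IsPFilter {c : D | a ⊔ c = ⊤} := by
  refine IsPFilter.of_def ⟨⊤, sup_top_eq a⟩ ?_ ?_
  · intro x hx y hy
    refine ⟨x ⊓ y, ?_, inf_le_left, inf_le_right⟩
    change a ⊔ x ⊓ y = ⊤
    rw [sup_inf_left, hx, hy, top_inf_eq]
  · intro x y hxy hx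
    exact top_le_iff.1 (hx ▸ sup_le_sup_left hxy a)

theorem Order.Ideal.IsPrime.primeFilter_compl {J : Ideal D} (hJ : J.IsPrime) :
    PrimeFilter (J : Set D)ᶜ :=
  ⟨⟨hJ.top_notMem, fun _ _ hx hxy hy => hx (J.lower hxy hy),
      fun _ _ hx hy hxy => (hJ.mem_or_mem hxy).elim hx hy⟩,
    fun h => h J.bot_mem, fun _ _ hxy => not_and_or.1 (mt Ideal.sup_mem_iff.2 hxy)⟩

theorem PrimeFilter.mem_of_sup_eq_top {U : Set D} (hU : PrimeFilter U) {a c : D}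
    (hac : a ⊔ c = ⊤) (ha : a ∉ U) : c ∈ U :=
  (hU.2.2 a c (hac ▸ hU.1.1)).resolve_left ha

theorem exists_isPrime_ideal_of_forall_sup_eq_top {Γ : Set D} (hΓ : IsIdeal Γᶜ) {a : D}
    (h : ∀ c : D, a ⊔ c = ⊤ → c ∈ Γ) :
    ∃ J : Ideal D, J.IsPrime ∧ a ∈ J ∧ Γᶜ ⊆ J := by
  set I : Ideal D := Ideal.principal a ⊔ hΓ.toIdeal
  have hdisj : Disjoint ((isPFilter_setOf_sup_eq_top a).toPFilter : Set D) (I : Set D) := by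
    refine Set.disjoint_left.2 fun c (hc : a ⊔ c = ⊤) hcI => ?_
    obtain ⟨i, hi, y, hy, hciy⟩ := Ideal.mem_sup.1 hcI
    refine hy (h y (top_le_iff.1 ?_))
    calc ⊤ = a ⊔ c := hc.symm
      _ ≤ a ⊔ (i ⊔ y) := sup_le_sup_left hciy a
      _ = a ⊔ y := by rw [← sup_assoc, sup_eq_left.2 (Ideal.mem_principal.1 hi)]
  obtain ⟨J, hJ, hIJ, -⟩ := DistribLattice.prime_ideal_of_disjoint_filter_ideal hdisj
  exact ⟨J, hJ, hIJ (Ideal.mem_sup.2 ⟨a, Ideal.mem_principal_self, ⊥, Ideal.bot_mem _, by simp⟩),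
    fun y hy => hIJ (Ideal.mem_sup.2 ⟨⊥, Ideal.bot_mem _, y, hy, by simp⟩)⟩

end

/-- for a clan `Γ` and `a ∈ D`, `(∀ c, a + c = 1 → c ∈ Γ)` iff there is a
prime filter `U ⊆ Γ` with `a ∉ U`. -/
theorem stmt12 {D : Type u} [DistribLattice D] [BoundedOrder D] (E : EDC D)
    (Γ : Set D) (hΓ : IsClan E Γ) (a : D) :
    (∀ c : D, a ⊔ c = ⊤ → c ∈ Γ) ↔ ∃ U : Set D, PrimeFilter U ∧ U ⊆ Γ ∧ a ∉ U := by
  obtain ⟨-, hbot, hup, hsup, -⟩ := hΓ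
  constructor
  · intro h
    obtain ⟨J, hJ, haJ, hΓJ⟩ := exists_isPrime_ideal_of_forall_sup_eq_top
      (isIdeal_compl_of_sup_mem hbot hup hsup) h
    exact ⟨(J : Set D)ᶜ, hJ.primeFilter_compl, Set.compl_subset_comm.1 hΓJ, fun h => h haJ⟩
  · rintro ⟨U, hU, hUΓ, haU⟩ c hac
    exact hUΓ (hU.mem_of_sup_eq_top hac haU)
end
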